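/- Let Λ be a k-graph, Γ an l-graph, π : ℕ^k → ℕ^l a homomorphism and φ : Λ → Γ a π-quasimorphism, with induced continuous map φ̃ : X_Λ → X_Γ, φ̃([λ,t]) = [φ(λ), π̃(t)]. (1) If π is rectilinear, meaning each π(e_i) = n_i e_{j_i} for some n_i ∈ ℕ and j_i ≤ l, and φ is weakly surjective, meaning for every γ ∈ Γ there exist λ ∈ Λ and p ≤ q ≤ π(d(λ)) in ℕ^l with γ = φ(λ)(p,q), then φ̃ is surjective. (2) If k = l, π is the identity (so φ is a k-graph morphism) and φ is injective, then φ̃ is injective. -/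

import Mathlib

/-- A `k`-graph: a countable small category (objects identified with the
identity morphisms, i.e. the morphisms of degree `0`) equipped with a degree
functor `d : Λ → ℕᵏ` satisfying the unique factorization property. -/
structure KGraph (k : ℕ) where
  /-- The morphisms of the category. -/
  Mor : Type
  /-- The category is countable. -/
  countable : Countable Mor
  /-- The source (domain) of a morphism, viewed as a degree-zero morphism. -/
  src : Mor → Mor
  /-- The range (codomain) of a morphism, viewed as a degree-zero morphism. -/
  rng : Mor → Mor
  /-- Composition `comp a b = a ∘ b`, meaningful when `src a = rng b`. -/
  comp : Mor → Mor → Mor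
  /-- The degree functor. -/
  deg : Mor → Fin k → ℕ
  src_src : ∀ a, src (src a) = src a
  rng_src : ∀ a, rng (src a) = src a
  src_rng : ∀ a, src (rng a) = rng a
  rng_rng : ∀ a, rng (rng a) = rng a
  deg_src : ∀ a, deg (src a) = 0
  deg_rng : ∀ a, deg (rng a) = 0
  src_comp : ∀ a b, src a = rng b → src (comp a b) = src b
  rng_comp : ∀ a b, src a = rng b → rng (comp a b) = rng a
  comp_assoc : ∀ a b c, src a = rng b → src b = rng c →
    comp (comp a b) c = comp a (comp b c)
  id_comp : ∀ a, comp (rng a) a = a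
  comp_id : ∀ a, comp a (src a) = a
  deg_comp : ∀ a b, src a = rng b → deg (comp a b) = deg a + deg b
  /-- The unique factorization property. -/
  factor : ∀ (a : Mor) (m n : Fin k → ℕ), deg a = m + n →
    ∃! p : Mor × Mor, deg p.1 = m ∧ deg p.2 = n ∧ src p.1 = rng p.2 ∧
      comp p.1 p.2 = a

namespace KGraph

variable {k : ℕ} (Λ : KGraph k)

/-- The segment `a(m,n)` of a morphism `a`, i.e. the (unique) middle factor of
`a = a(0,m) a(m,n) a(n, d(a))`; junk value `a` if no such factorization exists. -/
noncomputable def seg (a : Λ.Mor) (m n : Fin k → ℕ) : Λ.Mor :=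
  letI := Classical.propDecidable
  if h : ∃ b : Λ.Mor, Λ.deg b = n - m ∧ ∃ x y : Λ.Mor,
      Λ.deg x = m ∧ Λ.src x = Λ.rng b ∧ Λ.src b = Λ.rng y ∧
      a = Λ.comp x (Λ.comp b y)
  then h.choose else a

/-- The points `⨆_{λ ∈ Λ} {λ} × [0, d(λ)]` of which the topological
realization is a quotient; topologized as a disjoint union of subspaces of `ℝᵏ`. -/
def Points : Type :=
  Σ a : Λ.Mor, { t : Fin k → ℝ // ∀ i, 0 ≤ t i ∧ t i ≤ (Λ.deg a i : ℝ) }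

instance : TopologicalSpace Λ.Points :=
  inferInstanceAs (TopologicalSpace
    (Σ a : Λ.Mor, { t : Fin k → ℝ // ∀ i, 0 ≤ t i ∧ t i ≤ (Λ.deg a i : ℝ) }))

/-- Coordinatewise floor `⌊t⌋` (as a vector of naturals; this is the honest
floor on the relevant region `t ≥ 0`). -/
noncomputable def fl (t : Fin k → ℝ) : Fin k → ℕ := fun i => (⌊t i⌋).toNat

/-- Coordinatewise ceiling `⌈t⌉`. -/
noncomputable def ce (t : Fin k → ℝ) : Fin k → ℕ := fun i => (⌈t i⌉).toNat

/-- The fractional part `t - ⌊t⌋`. -/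
noncomputable def frac (t : Fin k → ℝ) : Fin k → ℝ := fun i => t i - ((⌊t i⌋).toNat : ℝ)

/-- The relation `(μ,s) ∼ (ν,t) ⟺ μ(⌊s⌋,⌈s⌉) = ν(⌊t⌋,⌈t⌉)` and
`s - ⌊s⌋ = t - ⌊t⌋` defining the topological realization. -/
def ptRel : Λ.Points → Λ.Points → Prop := fun p q =>
  Λ.seg p.1 (fl p.2.1) (ce p.2.1) = Λ.seg q.1 (fl q.2.1) (ce q.2.1) ∧
    frac p.2.1 = frac q.2.1

/-- `ptRel` is an equivalence relation. -/
def ptSetoid : Setoid Λ.Points where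
  r := Λ.ptRel
  iseqv := ⟨fun _ => ⟨rfl, rfl⟩, fun h => ⟨h.1.symm, h.2.symm⟩,
    fun h h' => ⟨h.1.trans h'.1, h.2.trans h'.2⟩⟩

/-- The topological realization `X_Λ` of the `k`-graph `Λ`. -/
def Real : Type := Quotient Λ.ptSetoid

instance : TopologicalSpace Λ.Real :=
  inferInstanceAs (TopologicalSpace (Quotient Λ.ptSetoid))

/-- The class `[λ, t] ∈ X_Λ` of a pair `(λ, t)` with `0 ≤ t ≤ d(λ)`. -/
def pt (a : Λ.Mor) (t : Fin k → ℝ) (h : ∀ i, 0 ≤ t i ∧ t i ≤ (Λ.deg a i : ℝ)) :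
    Λ.Real :=
  Quotient.mk Λ.ptSetoid ⟨a, ⟨t, h⟩⟩

/-- The open cube `Q_λ = {[λ,t] : t ∈ (0, d(λ))}` of a morphism `λ` (of degree
`≤ (1,…,1)`). -/
def Qcube (lam : Λ.Mor) : Set Λ.Real :=
  { x | ∃ (t : Fin k → ℝ) (h : ∀ i, 0 ≤ t i ∧ t i ≤ (Λ.deg lam i : ℝ)),
      (∀ i, Λ.deg lam i = 1 → 0 < t i ∧ t i < 1) ∧ x = Λ.pt lam t h }

/-- The `r`-skeleton `X_Λ^r` of the topological realization. -/
def skel' (G : KGraph k) : ℕ → Set G.Real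
  | 0 => ⋃ v ∈ { v : G.Mor | G.deg v = 0 }, G.Qcube v
  | (r+1) => skel' G r ∪
      ⋃ lam ∈ { lam : G.Mor | G.deg lam ≤ 1 ∧ ∑ i, G.deg lam i = r + 1 },
        G.Qcube lam

/-- The `r`-skeleton (wrapper). -/
def skel (r : ℕ) : Set Λ.Real := skel' Λ r

/-- A `k`-graph is connected if any two vertices are joined by an undirected
path of morphisms. -/
def Connected : Prop :=
  ∀ u v : Λ.Mor, Λ.deg u = 0 → Λ.deg v = 0 →
    Relation.ReflTransGen (fun x y => ∃ e : Λ.Mor,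
      (Λ.src e = x ∧ Λ.rng e = y) ∨ (Λ.src e = y ∧ Λ.rng e = x)) u v

end KGraph

/-- A morphism of `k`-graphs: a degree-preserving functor. -/
@[ext]
structure KGraphHom {k : ℕ} (Λ Γ : KGraph k) where
  toFun : Λ.Mor → Γ.Mor
  map_src : ∀ a, toFun (Λ.src a) = Γ.src (toFun a)
  map_rng : ∀ a, toFun (Λ.rng a) = Γ.rng (toFun a)
  map_comp : ∀ a b, Λ.src a = Λ.rng b →
    toFun (Λ.comp a b) = Γ.comp (toFun a) (toFun b)
  map_deg : ∀ a, Γ.deg (toFun a) = Λ.deg a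

namespace KGraphHom

variable {k : ℕ} {Λ Γ Θ : KGraph k}

/-- The identity `k`-graph morphism. -/
def id (Λ : KGraph k) : KGraphHom Λ Λ :=
  ⟨fun a => a, fun _ => rfl, fun _ => rfl, fun _ _ _ => rfl, fun _ => rfl⟩

/-- Composition of `k`-graph morphisms. -/
def comp (ψ : KGraphHom Γ Θ) (φ : KGraphHom Λ Γ) : KGraphHom Λ Θ where
  toFun := ψ.toFun ∘ φ.toFun
  map_src a := by simp [Function.comp, φ.map_src, ψ.map_src]
  map_rng a := by simp [Function.comp, φ.map_rng, ψ.map_rng]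
  map_comp a b h := by
    simp only [Function.comp]
    rw [φ.map_comp a b h, ψ.map_comp _ _ (by rw [← φ.map_src, ← φ.map_rng, h])]
  map_deg a := by simp [Function.comp, φ.map_deg, ψ.map_deg]

/-- The induced map on points `(λ, t) ↦ (φ(λ), t)`. -/
def pointMap (φ : KGraphHom Λ Γ) : Λ.Points → Γ.Points :=
  fun p => ⟨φ.toFun p.1, ⟨p.2.1, fun i => by rw [φ.map_deg]; exact p.2.2 i⟩⟩

/-- The induced map `φ̃ : X_Λ → X_Γ` on topological realizations,
`φ̃([λ,t]) = [φ(λ), t]` (defined via choice of representatives). -/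
noncomputable def real (φ : KGraphHom Λ Γ) : Λ.Real → Γ.Real :=
  fun x => Quotient.mk Γ.ptSetoid (φ.pointMap (Quotient.out x))

end KGraphHom

/-- A covering of `k`-graphs: a surjective degree-preserving functor
`p : Ω → Λ` mapping `Ωv` bijectively onto `Λp(v)` and `vΩ` bijectively onto
`p(v)Λ` for every vertex `v` of `Ω`. -/
def KGraphHom.IsCovering {k : ℕ} {Ω Λ : KGraph k} (p : KGraphHom Ω Λ) : Prop :=
  Function.Surjective p.toFun ∧
    ∀ v : Ω.Mor, Ω.deg v = 0 →
      Set.BijOn p.toFun { a | Ω.src a = v } { b | Λ.src b = p.toFun v } ∧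
      Set.BijOn p.toFun { a | Ω.rng a = v } { b | Λ.rng b = p.toFun v }

/-- A `π`-quasimorphism from a `k`-graph `Λ` to an `l`-graph `Γ`, for a monoid
homomorphism `π : ℕᵏ → ℕˡ`: a functor `φ` with `d(φ(λ)) = π(d(λ))`. -/
@[ext]
structure KGraphQHom {k l : ℕ} (Λ : KGraph k) (Γ : KGraph l)
    (π : (Fin k → ℕ) →+ (Fin l → ℕ)) where
  toFun : Λ.Mor → Γ.Mor
  map_src : ∀ a, toFun (Λ.src a) = Γ.src (toFun a)
  map_rng : ∀ a, toFun (Λ.rng a) = Γ.rng (toFun a)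
  map_comp : ∀ a b, Λ.src a = Λ.rng b →
    toFun (Λ.comp a b) = Γ.comp (toFun a) (toFun b)
  map_deg : ∀ a, Γ.deg (toFun a) = π (Λ.deg a)

/-- The linear extension `π̃ : ℝᵏ → ℝˡ` of a homomorphism `π : ℕᵏ → ℕˡ`,
`π̃(t) = ∑ i, t_i π(e_i)`. -/
noncomputable def lext {k l : ℕ} (π : (Fin k → ℕ) →+ (Fin l → ℕ))
    (t : Fin k → ℝ) : Fin l → ℝ :=
  fun j => ∑ i, t i * (π (Pi.single i 1) j : ℝ)

/-- Composition of quasimorphisms: a `π'`-quasimorphism following a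
`π`-quasimorphism is a `π' ∘ π`-quasimorphism. -/
def KGraphQHom.comp {k l h : ℕ} {Λ : KGraph k} {Γ : KGraph l} {Θ : KGraph h}
    {π : (Fin k → ℕ) →+ (Fin l → ℕ)} {π' : (Fin l → ℕ) →+ (Fin h → ℕ)}
    (ψ : KGraphQHom Γ Θ π') (φ : KGraphQHom Λ Γ π) :
    KGraphQHom Λ Θ (π'.comp π) where
  toFun := ψ.toFun ∘ φ.toFun
  map_src a := by simp [Function.comp, φ.map_src, ψ.map_src]
  map_rng a := by simp [Function.comp, φ.map_rng, ψ.map_rng]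
  map_comp a b hab := by
    simp only [Function.comp]
    rw [φ.map_comp a b hab, ψ.map_comp _ _ (by rw [← φ.map_src, ← φ.map_rng, hab])]
  map_deg a := by simp [Function.comp, φ.map_deg, ψ.map_deg]


/-! A point of `X_Γ` is `[γ, t]` with `γ = φ(λ)(p,q)`. Since a segment of a segment is a
segment, `[γ, t] = [φ(λ), p + t]`, and when `π` is rectilinear the equation `π̃(s) = p + t`
can be solved inside the cube `[0, d(λ)]` by `sᵢ = (p + t)_{jᵢ} · d(λ)ᵢ / π(d(λ))_{jᵢ}`.
For injectivity, a morphism `φ` maps the segment `λ(⌊t⌋,⌈t⌉)` to `φ(λ)(⌊t⌋,⌈t⌉)`, so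
injectivity of `φ` pulls the relation defining `X_Γ` back to the one defining `X_Λ`. -/

namespace KGraph

variable {k : ℕ} (G : KGraph k)

/-- `b` is the segment `a(m,n)`: the predicate whose chosen witness is `seg a m n`. -/
def IsSeg (a : G.Mor) (m n : Fin k → ℕ) (b : G.Mor) : Prop :=
  G.deg b = n - m ∧ ∃ x y : G.Mor,
    G.deg x = m ∧ G.src x = G.rng b ∧ G.src b = G.rng y ∧
    a = G.comp x (G.comp b y)

variable {G}

theorem eq_and_eq_of_comp_eq_comp {x y x' y' : G.Mor} (hxy : G.src x = G.rng y)
    (hxy' : G.src x' = G.rng y') (hx : G.deg x = G.deg x')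
    (h : G.comp x y = G.comp x' y') : x = x' ∧ y = y' := by
  have hy : G.deg y = G.deg y' := by
    have := G.deg_comp x' y' hxy'
    rw [← h, G.deg_comp x y hxy, hx] at this
    exact add_left_cancel this
  obtain ⟨_, -, huniq⟩ := G.factor (G.comp x y) (G.deg x) (G.deg y) (G.deg_comp x y hxy)
  have h₁ := huniq (x, y) ⟨rfl, rfl, hxy, rfl⟩
  have h₂ := huniq (x', y') ⟨hx.symm, hy.symm, hxy', h.symm⟩
  exact Prod.ext_iff.mp (h₁.trans h₂.symm)

theorem IsSeg.unique {a b b' : G.Mor} {m n : Fin k → ℕ} (h : G.IsSeg a m n b)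
    (h' : G.IsSeg a m n b') : b = b' := by
  obtain ⟨hb, x, y, hx, hxb, hby, ha⟩ := h
  obtain ⟨hb', x', y', hx', hxb', hby', ha'⟩ := h'
  have hby_eq := (eq_and_eq_of_comp_eq_comp (hxb.trans (G.rng_comp b y hby).symm)
    (hxb'.trans (G.rng_comp b' y' hby').symm) (hx.trans hx'.symm) (ha.symm.trans ha')).2
  exact (eq_and_eq_of_comp_eq_comp hby hby' (hb.trans hb'.symm) hby_eq).1

theorem exists_isSeg {a : G.Mor} {m n : Fin k → ℕ} (hmn : m ≤ n) (hn : n ≤ G.deg a) :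
    ∃ b, G.IsSeg a m n b := by
  have hdeg : G.deg a = m + ((n - m) + (G.deg a - n)) := by
    rw [← add_assoc, add_tsub_cancel_of_le hmn, add_tsub_cancel_of_le hn]
  obtain ⟨⟨x, r⟩, ⟨hx, hr, hxr, rfl⟩, -⟩ := G.factor a m _ hdeg
  obtain ⟨⟨b, y⟩, ⟨hb, -, hby, rfl⟩, -⟩ := G.factor r (n - m) _ hr
  exact ⟨b, hb, x, y, hx, hxr.trans (G.rng_comp b y hby), hby, rfl⟩

theorem isSeg_seg_of_exists {a : G.Mor} {m n : Fin k → ℕ} (he : ∃ b, G.IsSeg a m n b) :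
    G.IsSeg a m n (G.seg a m n) := by
  have hseg : G.seg a m n = he.choose := dif_pos he
  exact hseg ▸ he.choose_spec

theorem isSeg_seg {a : G.Mor} {m n : Fin k → ℕ} (hmn : m ≤ n) (hn : n ≤ G.deg a) :
    G.IsSeg a m n (G.seg a m n) :=
  isSeg_seg_of_exists (exists_isSeg hmn hn)

theorem IsSeg.seg_eq {a b : G.Mor} {m n : Fin k → ℕ} (h : G.IsSeg a m n b) :
    G.seg a m n = b :=
  (isSeg_seg_of_exists ⟨b, h⟩).unique h

theorem IsSeg.trans {a c b : G.Mor} {p q m n : Fin k → ℕ} (hc : G.IsSeg a p q c)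
    (hb : G.IsSeg c m n b) : G.IsSeg a (p + m) (p + n) b := by
  obtain ⟨-, X, Y, hX, hXc, hcY, rfl⟩ := hc
  obtain ⟨hb, x, y, hx, hxb, hby, rfl⟩ := hb
  have hx_by : G.src x = G.rng (G.comp b y) := hxb.trans (G.rng_comp b y hby).symm
  have hyY : G.src y = G.rng Y := by
    rwa [G.src_comp x _ hx_by, G.src_comp b y hby] at hcY
  have hXx : G.src X = G.rng x := by rwa [G.rng_comp x _ hx_by] at hXc
  have hb_yY : G.src b = G.rng (G.comp y Y) := hby.trans (G.rng_comp y Y hyY).symm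
  refine ⟨?_, G.comp X x, G.comp y Y, ?_, ?_, hb_yY, ?_⟩
  · rw [hb, add_tsub_add_eq_tsub_left]
  · rw [G.deg_comp X x hXx, hX, hx]
  · rw [G.src_comp X x hXx, hxb]
  · rw [G.comp_assoc x _ Y hx_by (by rwa [G.src_comp b y hby]), G.comp_assoc b y Y hby hyY,
      G.comp_assoc X x _ hXx (hxb.trans (G.rng_comp b _ hb_yY).symm)]

theorem fl_le_ce (t : Fin k → ℝ) : fl t ≤ ce t := fun i =>
  Int.toNat_le_toNat (Int.floor_le_ceil (t i))

theorem ce_le_of_le {t : Fin k → ℝ} {d : Fin k → ℕ} (h : ∀ i, t i ≤ d i) : ce t ≤ d :=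
  fun i => Int.toNat_le.mpr (Int.ceil_le.mpr (by exact_mod_cast h i))

theorem fl_natCast_add (p : Fin k → ℕ) {t : Fin k → ℝ} (ht : ∀ i, 0 ≤ t i) :
    fl (fun i => (p i : ℝ) + t i) = p + fl t := by
  funext i
  have := Int.floor_nonneg.mpr (ht i)
  simp only [fl, Pi.add_apply, Int.floor_natCast_add]
  omega

theorem ce_natCast_add (p : Fin k → ℕ) {t : Fin k → ℝ} (ht : ∀ i, 0 ≤ t i) :
    ce (fun i => (p i : ℝ) + t i) = p + ce t := by
  funext i
  have := Int.ceil_nonneg (ht i)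
  simp only [ce, Pi.add_apply, Int.ceil_natCast_add]
  omega

theorem frac_natCast_add (p : Fin k → ℕ) {t : Fin k → ℝ} (ht : ∀ i, 0 ≤ t i) :
    frac (fun i => (p i : ℝ) + t i) = frac t := by
  funext i
  have hfl : (⌊(p i : ℝ) + t i⌋).toNat = p i + (⌊t i⌋).toNat :=
    congrFun (fl_natCast_add p ht) i
  simp only [frac, hfl]
  push_cast
  ring

theorem pt_eq_of_isSeg {a c : G.Mor} {p q : Fin k → ℕ} (hc : G.IsSeg a p q c)
    {t u : Fin k → ℝ} (hu : ∀ i, u i = p i + t i)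
    (hua : ∀ i, 0 ≤ u i ∧ u i ≤ (G.deg a i : ℝ))
    (htc : ∀ i, 0 ≤ t i ∧ t i ≤ (G.deg c i : ℝ)) :
    G.pt a u hua = G.pt c t htc := by
  obtain rfl : u = fun i => (p i : ℝ) + t i := funext hu
  have ht : ∀ i, 0 ≤ t i := fun i => (htc i).1
  refine Quotient.sound ⟨?_, frac_natCast_add p ht⟩
  change G.seg a (fl _) (ce _) = G.seg c (fl t) (ce t)
  rw [fl_natCast_add p ht, ce_natCast_add p ht]
  exact (hc.trans (isSeg_seg (fl_le_ce t) (ce_le_of_le fun i => (htc i).2))).seg_eq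

end KGraph

theorem lext_natCast {k l : ℕ} (π : (Fin k → ℕ) →+ (Fin l → ℕ)) (d : Fin k → ℕ)
    (j : Fin l) :
    lext π (fun i => (d i : ℝ)) j = π d j := by
  conv_rhs => rw [← Finset.univ_sum_single d]
  simp only [lext, map_sum, Finset.sum_apply, Nat.cast_sum]
  refine Finset.sum_congr rfl fun i _ => ?_
  have hsingle : (Pi.single i (d i) : Fin k → ℕ) = d i • Pi.single i 1 := by
    rw [← Pi.single_smul', smul_eq_mul, mul_one]
  rw [hsingle, map_nsmul, Pi.smul_apply, smul_eq_mul, Nat.cast_mul]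

theorem lext_mem_box {k l : ℕ} (π : (Fin k → ℕ) →+ (Fin l → ℕ)) {t : Fin k → ℝ}
    {d : Fin k → ℕ} (ht : ∀ i, 0 ≤ t i ∧ t i ≤ d i) (j : Fin l) :
    0 ≤ lext π t j ∧ lext π t j ≤ π d j := by
  refine ⟨Finset.sum_nonneg fun i _ => mul_nonneg (ht i).1 (Nat.cast_nonneg _), ?_⟩
  rw [← lext_natCast]
  exact Finset.sum_le_sum fun i _ => mul_le_mul_of_nonneg_right (ht i).2 (Nat.cast_nonneg _)

theorem lext_id {k : ℕ} (t : Fin k → ℝ) : lext (AddMonoidHom.id (Fin k → ℕ)) t = t := by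
  funext j
  simp [lext, Pi.single_apply]

def AddMonoidHom.IsRectilinear {k l : ℕ} (π : (Fin k → ℕ) →+ (Fin l → ℕ)) : Prop :=
  ∀ i : Fin k, ∃ (n : ℕ) (j : Fin l), π (Pi.single i 1) = Pi.single j n

theorem AddMonoidHom.IsRectilinear.exists_lext_eq {k l : ℕ}
    {π : (Fin k → ℕ) →+ (Fin l → ℕ)} (hπ : π.IsRectilinear) {d : Fin k → ℕ} {u : Fin l → ℝ}
    (hu : ∀ j, 0 ≤ u j ∧ u j ≤ π d j) :
    ∃ s : Fin k → ℝ, (∀ i, 0 ≤ s i ∧ s i ≤ d i) ∧ lext π s = u := by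
  choose n J hJ using hπ
  -- where `π d j = 0` the junk value `u j / 0 = 0` is harmless, as then `u j = 0`
  set r : Fin l → ℝ := fun j => u j / π d j
  have hr : ∀ j, 0 ≤ r j ∧ r j ≤ 1 := fun j =>
    ⟨div_nonneg (hu j).1 (Nat.cast_nonneg _), div_le_one_of_le₀ (hu j).2 (Nat.cast_nonneg _)⟩
  refine ⟨fun i => d i * r (J i), fun i => ⟨mul_nonneg (Nat.cast_nonneg _) (hr _).1,
    mul_le_of_le_one_right (Nat.cast_nonneg _) (hr _).2⟩, funext fun j => ?_⟩
  have hsupp : ∀ i, r (J i) * π (Pi.single i 1) j = r j * π (Pi.single i 1) j := by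
    intro i
    by_cases hij : J i = j
    · rw [hij]
    · simp [hJ i, Ne.symm hij]
  calc lext π (fun i => d i * r (J i)) j
      = ∑ i, (d i : ℝ) * π (Pi.single i 1) j * r j := by
        refine Finset.sum_congr rfl fun i _ => ?_
        rw [mul_assoc, hsupp i]
        ring
    _ = lext π (fun i => (d i : ℝ)) j * r j := by rw [lext, Finset.sum_mul]
    _ = π d j * (u j / π d j) := by rw [lext_natCast]
    _ = u j := mul_div_cancel_of_imp' fun h => by linarith [hu j]

namespace KGraphQHom

section

variable {k l : ℕ} {Λ : KGraph k} {Γ : KGraph l} {π : (Fin k → ℕ) →+ (Fin l → ℕ)}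

theorem isSeg_map (φ : KGraphQHom Λ Γ π) {a b : Λ.Mor} {m n : Fin k → ℕ}
    (h : Λ.IsSeg a m n b) (hmn : m ≤ n) :
    Γ.IsSeg (φ.toFun a) (π m) (π n) (φ.toFun b) := by
  obtain ⟨hb, x, y, hx, hxb, hby, rfl⟩ := h
  refine ⟨?_, φ.toFun x, φ.toFun y, by rw [φ.map_deg, hx],
    by rw [← φ.map_src, ← φ.map_rng, hxb], by rw [← φ.map_src, ← φ.map_rng, hby], ?_⟩
  · rw [φ.map_deg, hb]
    nth_rewrite 2 [← tsub_add_cancel_of_le hmn]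
    rw [map_add, add_tsub_cancel_right]
  · rw [φ.map_comp x _ (hxb.trans (Λ.rng_comp b y hby).symm), φ.map_comp b y hby]

theorem seg_map (φ : KGraphQHom Λ Γ π) {a : Λ.Mor} {m n : Fin k → ℕ} (hmn : m ≤ n)
    (hn : n ≤ Λ.deg a) :
    Γ.seg (φ.toFun a) (π m) (π n) = φ.toFun (Λ.seg a m n) :=
  (φ.isSeg_map (KGraph.isSeg_seg hmn hn) hmn).seg_eq

theorem lext_mem_box (φ : KGraphQHom Λ Γ π) {a : Λ.Mor} {t : Fin k → ℝ}
    (ht : ∀ i, 0 ≤ t i ∧ t i ≤ (Λ.deg a i : ℝ)) (j : Fin l) :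
    0 ≤ lext π t j ∧ lext π t j ≤ (Γ.deg (φ.toFun a) j : ℝ) := by
  rw [φ.map_deg]
  exact _root_.lext_mem_box π ht j

def WeaklySurjective (φ : KGraphQHom Λ Γ π) : Prop :=
  ∀ γ : Γ.Mor, ∃ (lam : Λ.Mor) (p q : Fin l → ℕ),
    p ≤ q ∧ q ≤ π (Λ.deg lam) ∧ γ = Γ.seg (φ.toFun lam) p q

theorem realization_surjective (φ : KGraphQHom Λ Γ π) (hπ : π.IsRectilinear)
    (hφ : φ.WeaklySurjective) (F : Λ.Real → Γ.Real)
    (hF : ∀ (a : Λ.Mor) (t : Fin k → ℝ)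
      (hb : ∀ i, 0 ≤ t i ∧ t i ≤ (Λ.deg a i : ℝ))
      (hb' : ∀ j, 0 ≤ lext π t j ∧ lext π t j ≤ (Γ.deg (φ.toFun a) j : ℝ)),
      F (Λ.pt a t hb) = Γ.pt (φ.toFun a) (lext π t) hb') :
    Function.Surjective F := by
  rintro ⟨γ, t, ht⟩
  obtain ⟨lam, p, q, hpq, hq, rfl⟩ := hφ γ
  have hseg := Γ.isSeg_seg hpq (by rwa [φ.map_deg] : q ≤ Γ.deg (φ.toFun lam))
  have hu : ∀ j, 0 ≤ (p j : ℝ) + t j ∧ (p j : ℝ) + t j ≤ π (Λ.deg lam) j := by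
    intro j
    have htj := (ht j).2
    rw [hseg.1, Pi.sub_apply, Nat.cast_sub (hpq j)] at htj
    have hqj : (q j : ℝ) ≤ π (Λ.deg lam) j := by exact_mod_cast hq j
    constructor <;> linarith [(ht j).1, (p j).cast_nonneg (α := ℝ)]
  obtain ⟨s, hs, hsu⟩ := hπ.exists_lext_eq hu
  refine ⟨Λ.pt lam s hs, ?_⟩
  rw [hF lam s hs (φ.lext_mem_box hs)]
  exact Γ.pt_eq_of_isSeg hseg (congrFun hsu) _ ht

end

theorem realization_injective {k : ℕ} {Λ Γ : KGraph k}
    (ψ : KGraphQHom Λ Γ (AddMonoidHom.id (Fin k → ℕ))) (hψ : Function.Injective ψ.toFun)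
    (G : Λ.Real → Γ.Real)
    (hG : ∀ (a : Λ.Mor) (t : Fin k → ℝ)
      (hb : ∀ i, 0 ≤ t i ∧ t i ≤ (Λ.deg a i : ℝ))
      (hb' : ∀ j, 0 ≤ lext (AddMonoidHom.id (Fin k → ℕ)) t j ∧
        lext (AddMonoidHom.id (Fin k → ℕ)) t j ≤ (Γ.deg (ψ.toFun a) j : ℝ)),
      G (Λ.pt a t hb) = Γ.pt (ψ.toFun a) (lext (AddMonoidHom.id (Fin k → ℕ)) t) hb') :
    Function.Injective G := by
  rintro ⟨a, t, ht⟩ ⟨b, s, hs⟩ h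
  change G (Λ.pt a t ht) = G (Λ.pt b s hs) at h
  rw [hG a t ht (ψ.lext_mem_box ht), hG b s hs (ψ.lext_mem_box hs)] at h
  obtain ⟨hseg, hfrac⟩ := Quotient.exact h
  refine Quotient.sound ⟨hψ ?_, by simpa only [lext_id] using hfrac⟩
  change ψ.toFun (Λ.seg a (KGraph.fl t) (KGraph.ce t)) =
    ψ.toFun (Λ.seg b (KGraph.fl s) (KGraph.ce s))
  rw [← ψ.seg_map (KGraph.fl_le_ce t) (KGraph.ce_le_of_le fun i => (ht i).2),
    ← ψ.seg_map (KGraph.fl_le_ce s) (KGraph.ce_le_of_le fun i => (hs i).2)]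
  simpa only [lext_id, AddMonoidHom.id_apply] using hseg

end KGraphQHom

/-- Let `φ : Λ → Γ` be a `π`-quasimorphism with induced
continuous map `F = φ̃ : X_Λ → X_Γ`, `φ̃([λ,t]) = [φ(λ), π̃(t)]`.
(1) If `π` is rectilinear (each `π(e_i) = n_i e_{j_i}`) and `φ` is weakly
surjective (every `γ ∈ Γ` is a segment `φ(λ)(p,q)` of some image), then `φ̃` is
surjective.  (2) If `k = l` and `π = id` (so `φ` is a `k`-graph morphism) and
`φ` is injective, then `φ̃` is injective. -/
theorem quasimorphism_realization_surjective_injective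
    {k l : ℕ} (Λ : KGraph k) (Γ : KGraph l)
    (π : (Fin k → ℕ) →+ (Fin l → ℕ)) (φ : KGraphQHom Λ Γ π)
    (F : C(Λ.Real, Γ.Real))
    (hF : ∀ (a : Λ.Mor) (t : Fin k → ℝ)
      (hb : ∀ i, 0 ≤ t i ∧ t i ≤ (Λ.deg a i : ℝ))
      (hb' : ∀ j, 0 ≤ lext π t j ∧ lext π t j ≤ (Γ.deg (φ.toFun a) j : ℝ)),
      F (Λ.pt a t hb) = Γ.pt (φ.toFun a) (lext π t) hb') :
    ((∀ i : Fin k, ∃ (n : ℕ) (j : Fin l), π (Pi.single i 1) = Pi.single j n) →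
      (∀ γ : Γ.Mor, ∃ (lam : Λ.Mor) (p q : Fin l → ℕ),
        p ≤ q ∧ q ≤ π (Λ.deg lam) ∧ γ = Γ.seg (φ.toFun lam) p q) →
      Function.Surjective F) ∧
    (∀ (Λ' Γ' : KGraph k)
      (ψ : KGraphQHom Λ' Γ' (AddMonoidHom.id (Fin k → ℕ)))
      (G : C(Λ'.Real, Γ'.Real)),
      (∀ (a : Λ'.Mor) (t : Fin k → ℝ)
        (hb : ∀ i, 0 ≤ t i ∧ t i ≤ (Λ'.deg a i : ℝ))
        (hb' : ∀ j, 0 ≤ lext (AddMonoidHom.id (Fin k → ℕ)) t j ∧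
          lext (AddMonoidHom.id (Fin k → ℕ)) t j ≤ (Γ'.deg (ψ.toFun a) j : ℝ)),
        G (Λ'.pt a t hb) =
          Γ'.pt (ψ.toFun a) (lext (AddMonoidHom.id (Fin k → ℕ)) t) hb') →
      Function.Injective ψ.toFun → Function.Injective G) :=
  ⟨fun hπ hφ => φ.realization_surjective hπ hφ F hF,
    fun _ _ ψ G hG hψ => ψ.realization_injective hψ G hG⟩
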